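/- arXiv:1512.03514 — 3 statements merged into one kernel-verified Lean document; each statement's English description precedes it below -/
import Mathlib

section
/- For every μ ≥ 0 and every y > 0, the series Σ_{n=1}^∞ |ζ_{μ,n}(y)| converges (is finite). -/
open MeasureTheory ProbabilityTheory Real Filter Set
open scoped ENNReal NNReal Topology

/-- Modified Bessel function of the first kind `I_μ(x)`, defined by its series. -/
noncomputable def besselI (μ x : ℝ) : ℝ :=
  ∑' k : ℕ, (x / 2) ^ (2 * (k : ℝ) + μ) / ((k.factorial : ℝ) * Real.Gamma ((k : ℝ) + μ + 1))

/-- Macdonald function (modified Bessel function of the second kind) `K_μ(x)`. -/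
noncomputable def besselK (μ x : ℝ) : ℝ :=
  ∫ t in Set.Ioi (0 : ℝ), Real.exp (-(x * Real.cosh t)) * Real.cosh (μ * t)

/-- `S_m = 2 π^{(m+1)/2} / Γ((m+1)/2)`, the surface area of the `m`-dimensional unit sphere. -/
noncomputable def sphereArea (m : ℕ) : ℝ :=
  2 * Real.pi ^ (((m : ℝ) + 1) / 2) / Real.Gamma (((m : ℝ) + 1) / 2)

/-- The coefficient `ξ_{μ,n}(y)`. -/
noncomputable def xiCoef (μ : ℝ) (n : ℕ) (y : ℝ) : ℝ :=
  if μ = 0 ∧ n = 0 then besselI 0 y ^ 2 / 2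
  else (-1 : ℝ) ^ n * (μ + n) * Real.Gamma (2 * μ + n) * besselI (μ + n) y ^ 2
    / (n.factorial : ℝ)

/-- The coefficient `ζ_{μ,n}(y)`. -/
noncomputable def zetaCoef (μ : ℝ) (n : ℕ) (y : ℝ) : ℝ :=
  if μ = 0 ∧ n = 0 then besselI 0 y * besselI 1 y / 2
  else (-1 : ℝ) ^ n * (μ + n) * Real.Gamma (2 * μ + n) * besselI (μ + n) y
    * besselI (μ + n + 1) y / (n.factorial : ℝ)

/-- A standard `d`-dimensional Brownian motion on a probability space `(Ω, P)`. -/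
structure IsBrownianMotion {Ω : Type*} [MeasurableSpace Ω] (P : Measure Ω) (d : ℕ)
    (B : ℝ → Ω → EuclideanSpace ℝ (Fin d)) : Prop where
  isProb : IsProbabilityMeasure P
  meas : ∀ t : ℝ, Measurable (B t)
  cont : ∀ᵐ ω ∂P, Continuous fun t : ℝ => B t ω
  init : ∀ᵐ ω ∂P, B 0 ω = 0
  indep_incr : ∀ (n : ℕ) (t : Fin (n + 1) → ℝ), Monotone t → (∀ i, 0 ≤ t i) →
    iIndepFun
      (fun i : Fin n => fun ω => B (t i.succ) ω - B (t i.castSucc) ω) P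
  gauss_coord : ∀ s t : ℝ, 0 ≤ s → s ≤ t → ∀ i : Fin d,
    Measure.map (fun ω => (B t ω - B s ω) i) P = gaussianReal 0 (Real.toNNReal (t - s))
  indep_coord : ∀ s t : ℝ, 0 ≤ s → s ≤ t →
    iIndepFun
      (fun (i : Fin d) (ω : Ω) => (B t ω - B s ω) i) P

/-- Hitting time of the closed ball of radius `r` by the drifted process `B(s)+sv` started
shifted by `x`. -/
noncomputable def hitTime {Ω : Type*} {d : ℕ} (B : ℝ → Ω → EuclideanSpace ℝ (Fin d))
    (v x : EuclideanSpace ℝ (Fin d)) (r : ℝ) (ω : Ω) : ℝ :=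
  sInf {s : ℝ | 0 ≤ s ∧ ‖B s ω + s • v + x‖ ≤ r}

/-- `L_v^d(t) = ∫_{ℝ^d ∖ D} P(τ_v(x) ≤ t) dx`. -/
noncomputable def sausageL {Ω : Type*} [MeasurableSpace Ω] (P : Measure Ω) {d : ℕ}
    (B : ℝ → Ω → EuclideanSpace ℝ (Fin d)) (v : EuclideanSpace ℝ (Fin d)) (r t : ℝ) : ℝ :=
  ∫ x in (Metric.closedBall (0 : EuclideanSpace ℝ (Fin d)) r)ᶜ,
    (P {ω | hitTime B v x r ω ≤ t}).toReal

/-- `Σ_v^m(t) = e^{-|v|² t / 2} L_0^m(t)`, where `L0` stands for `L_0^m`. -/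
noncomputable def sigmaV (vnorm : ℝ) (L0 : ℝ → ℝ) (t : ℝ) : ℝ :=
  Real.exp (-(vnorm ^ 2 * t / 2)) * L0 t

/-- `Σ̃_v^m(t)`. -/
noncomputable def sigmaTilde (vnorm : ℝ) (L0 : ℝ → ℝ) (t : ℝ) : ℝ :=
  sigmaV vnorm L0 t + vnorm ^ 2 * ∫ s in (0:ℝ)..t, sigmaV vnorm L0 s
    + vnorm ^ 4 / 4 * ∫ s in (0:ℝ)..t, (t - s) * sigmaV vnorm L0 s

/-- The function `F_μ(λ)` (depending on `|v|` and `r`). -/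
noncomputable def Fmu (vnorm r μ lam : ℝ) : ℝ :=
  Real.sqrt (2 * lam + vnorm ^ 2) / lam ^ 2
    * besselK (μ + 1) (r * Real.sqrt (2 * lam + vnorm ^ 2))
    / besselK μ (r * Real.sqrt (2 * lam + vnorm ^ 2))

/-- The Gegenbauer polynomial `C_n^μ(x)` for `μ > 0`. -/
noncomputable def gegenbauerC (μ : ℝ) (n : ℕ) (x : ℝ) : ℝ :=
  (1 / Real.Gamma μ) * ∑ m ∈ Finset.range (n / 2 + 1),
    (-1 : ℝ) ^ m * Real.Gamma (μ + n - m) / ((m.factorial : ℝ) * ((n - 2 * m).factorial : ℝ))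
      * (2 * x) ^ (n - 2 * m)

/-- The constant `N_v^d` (as a function of `|v|`), the linear growth rate of the expected
volume of the Wiener sausage with drift. -/
noncomputable def NvD (d : ℕ) (r y : ℝ) : ℝ :=
  if d = 2 then
    Real.pi * besselI 0 (r * y) / besselK 0 (r * y)
      + 2 * Real.pi * ∑' n : ℕ,
        (-1 : ℝ) ^ (n + 1) * besselI ((n : ℝ) + 1) (r * y) / besselK ((n : ℝ) + 1) (r * y)
  else
    Real.pi * sphereArea (d - 2) / y ^ ((d : ℝ) - 2) * ∑' n : ℕ,
      (-1 : ℝ) ^ n * (((d : ℝ) / 2 - 1) + n) * Real.Gamma (2 * ((d : ℝ) / 2 - 1) + n)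
        / (n.factorial : ℝ)
        * besselI (((d : ℝ) / 2 - 1) + n) (r * y) / besselK (((d : ℝ) / 2 - 1) + n) (r * y)

/-!
Since `Γ(k + ν + 1) ≥ Γ(ν + 1)` for `ν ≥ 0`, the series of `I_ν(y)` is dominated termwise by
`(y/2)^ν / Γ(ν + 1)` times the exponential series at `(y/2)²`, so
`I_ν(y) ≤ (y/2)^ν e^{(y/2)²} / Γ(ν + 1)`. Together with `(μ + n) Γ(2μ + n) ≤ Γ(2μ + n + 1)`
this bounds `|ζ_{μ,n}(y)|` by a constant multiple of
`Γ(2μ + n + 1) (y/2)^{2n} / (n! Γ(μ + n + 1) Γ(μ + n + 2))`, whose consecutive ratios are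
`O((y/2)² / n²)`, so the ratio test applies.
-/

open scoped Nat

lemma Real.Gamma_le_Gamma_nat_add {x : ℝ} (hx : 1 ≤ x) (k : ℕ) :
    Gamma x ≤ Gamma (k + x) := by
  induction k with
  | zero => simp
  | succ k ih =>
    have hkx : 0 < (k : ℝ) + x := by positivity
    calc Gamma x ≤ Gamma (k + x) := ih
      _ ≤ (k + x) * Gamma (k + x) :=
          le_mul_of_one_le_left (Gamma_pos_of_pos hkx).le (by linarith [k.cast_nonneg (α := ℝ)])
      _ = Gamma ((k + 1 : ℕ) + x) := by
          rw [← Gamma_add_one hkx.ne']; push_cast; ring_nf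

noncomputable def besselITerm (ν x : ℝ) (k : ℕ) : ℝ :=
  (x / 2) ^ (2 * (k : ℝ) + ν) / (k ! * Gamma (k + ν + 1))

section besselI

variable {ν x : ℝ}

lemma besselITerm_nonneg (hν : -1 < ν) (hx : 0 ≤ x) (k : ℕ) : 0 ≤ besselITerm ν x k := by
  have : 0 < Gamma (k + ν + 1) := Gamma_pos_of_pos (by linarith [k.cast_nonneg (α := ℝ)])
  unfold besselITerm
  positivity

lemma besselITerm_le (hν : 0 ≤ ν) (hx : 0 < x) (k : ℕ) :
    besselITerm ν x k ≤ (x / 2) ^ ν / Gamma (ν + 1) * (((x / 2) ^ 2) ^ k / k !) := by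
  have hq : 0 < x / 2 := by positivity
  have hnum : (x / 2) ^ (2 * (k : ℝ) + ν) = ((x / 2) ^ 2) ^ k * (x / 2) ^ ν := by
    rw [rpow_add hq, ← pow_mul, ← rpow_natCast]; push_cast; ring_nf
  have hΓ : Gamma (ν + 1) ≤ Gamma (k + ν + 1) := by
    simpa only [add_assoc] using Gamma_le_Gamma_nat_add (x := ν + 1) (by linarith) k
  have hΓ0 : 0 < Gamma (ν + 1) := Gamma_pos_of_pos (by linarith)
  calc besselITerm ν x k = ((x / 2) ^ 2) ^ k * (x / 2) ^ ν / (k ! * Gamma (k + ν + 1)) := by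
        rw [besselITerm, hnum]
    _ ≤ ((x / 2) ^ 2) ^ k * (x / 2) ^ ν / (k ! * Gamma (ν + 1)) := by gcongr
    _ = _ := by field_simp

lemma besselI_nonneg (hν : -1 < ν) (hx : 0 ≤ x) : 0 ≤ besselI ν x :=
  tsum_nonneg (besselITerm_nonneg hν hx)

lemma besselI_le_rpow_mul_exp (hν : 0 ≤ ν) (hx : 0 < x) :
    besselI ν x ≤ (x / 2) ^ ν / Gamma (ν + 1) * exp ((x / 2) ^ 2) := by
  have hexp := (NormedSpace.expSeries_div_hasSum_exp ((x / 2) ^ 2)).mul_left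
    ((x / 2) ^ ν / Gamma (ν + 1))
  rw [← Real.exp_eq_exp_ℝ] at hexp
  have hsum : Summable (besselITerm ν x) :=
    .of_nonneg_of_le (besselITerm_nonneg (by linarith) hx.le) (besselITerm_le hν hx) hexp.summable
  exact hasSum_le (besselITerm_le hν hx) hsum.hasSum hexp

end besselI

noncomputable def zetaMajorant (μ q : ℝ) (n : ℕ) : ℝ :=
  Gamma (2 * μ + n + 1) * (q ^ 2) ^ n / (n ! * Gamma (μ + n + 1) * Gamma (μ + n + 2))

section zetaMajorant

variable {μ : ℝ}

lemma zetaMajorant_succ (hμ : 0 ≤ μ) (q : ℝ) (n : ℕ) :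
    zetaMajorant μ q (n + 1) =
      (2 * μ + n + 1) * q ^ 2 / ((n + 1) * (μ + n + 1) * (μ + n + 2)) * zetaMajorant μ q n := by
  have h1 : Gamma (2 * μ + (n + 1 : ℕ) + 1) = (2 * μ + n + 1) * Gamma (2 * μ + n + 1) := by
    rw [← Gamma_add_one (by positivity)]; push_cast; ring_nf
  have h2 : Gamma (μ + (n + 1 : ℕ) + 1) = (μ + n + 1) * Gamma (μ + n + 1) := by
    rw [← Gamma_add_one (by positivity)]; push_cast; ring_nf
  have h3 : Gamma (μ + (n + 1 : ℕ) + 2) = (μ + n + 2) * Gamma (μ + n + 2) := by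
    rw [← Gamma_add_one (by positivity)]; push_cast; ring_nf
  have hΓ1 := Gamma_pos_of_pos (by positivity : 0 < μ + n + 1)
  have hΓ2 := Gamma_pos_of_pos (by positivity : 0 < μ + n + 2)
  rw [zetaMajorant, zetaMajorant, h1, h2, h3, Nat.factorial_succ]
  push_cast
  field_simp
  ring

lemma summable_zetaMajorant (hμ : 0 ≤ μ) (q : ℝ) : Summable (zetaMajorant μ q) := by
  refine summable_of_ratio_norm_eventually_le (r := 1 / 2) (by norm_num) ?_
  filter_upwards [eventually_ge_atTop ⌈2 * q ^ 2⌉₊] with n hn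
  replace hn : 2 * q ^ 2 ≤ n := Nat.ceil_le.mp hn
  have hratio : (2 * μ + n + 1) * q ^ 2 / ((n + 1) * (μ + n + 1) * (μ + n + 2)) ≤ 1 / 2 := by
    have hn0 : (0 : ℝ) ≤ n := n.cast_nonneg
    rw [div_le_iff₀ (by positivity)]
    calc (2 * μ + n + 1) * q ^ 2 ≤ (μ + n + 1) * (2 * q ^ 2) := by nlinarith [sq_nonneg q]
      _ ≤ (μ + n + 1) * (n + 1) := by gcongr; linarith
      _ ≤ (μ + n + 1) * (n + 1) * ((μ + n + 2) / 2) :=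
          le_mul_of_one_le_right (by positivity) (by linarith)
      _ = 1 / 2 * ((n + 1) * (μ + n + 1) * (μ + n + 2)) := by ring
  rw [zetaMajorant_succ hμ, norm_mul, Real.norm_of_nonneg (by positivity)]
  gcongr

end zetaMajorant

lemma abs_zetaCoef_eq {μ y : ℝ} (hμ : 0 ≤ μ) (hy : 0 ≤ y) {n : ℕ} (hn : n ≠ 0) :
    |zetaCoef μ n y| =
      (μ + n) * Gamma (2 * μ + n) * besselI (μ + n) y * besselI (μ + n + 1) y / n ! := by
  have hn' : (0 : ℝ) < n := by positivity
  have hΓ := Gamma_pos_of_pos (by positivity : 0 < 2 * μ + n)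
  have hI₀ := besselI_nonneg (by linarith : -1 < μ + n) hy
  have hI₁ := besselI_nonneg (by linarith : -1 < μ + n + 1) hy
  rw [zetaCoef, if_neg (fun h => hn h.2)]
  simp only [abs_div, abs_mul, abs_pow, abs_neg, abs_one, one_pow, one_mul, Nat.abs_cast,
    abs_of_pos hΓ, abs_of_nonneg hI₀, abs_of_nonneg hI₁,
    abs_of_pos (by positivity : 0 < μ + n)]

lemma abs_zetaCoef_le {μ y : ℝ} (hμ : 0 ≤ μ) (hy : 0 < y) {n : ℕ} (hn : n ≠ 0) :
    |zetaCoef μ n y| ≤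
      (y / 2) ^ (2 * μ + 1) * exp ((y / 2) ^ 2) ^ 2 * zetaMajorant μ (y / 2) n := by
  have hq : 0 < y / 2 := by positivity
  have hn' : (0 : ℝ) < n := by positivity
  have hΓ₁ := Gamma_pos_of_pos (by positivity : 0 < μ + n + 1)
  have hΓ₂ := Gamma_pos_of_pos (by positivity : 0 < μ + n + 2)
  have hfactor : (μ + n) * Gamma (2 * μ + n) ≤ Gamma (2 * μ + n + 1) := by
    rw [Gamma_add_one (by positivity : 2 * μ + (n : ℝ) ≠ 0)]
    gcongr
    linarith
  have hI₀ := besselI_le_rpow_mul_exp (by positivity : 0 ≤ μ + n) hy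
  have hI₁ := besselI_le_rpow_mul_exp (by positivity : 0 ≤ μ + n + 1) hy
  rw [show μ + n + 1 + 1 = μ + n + 2 by ring] at hI₁
  have hpow : ((y / 2) ^ 2) ^ n =
      (y / 2) ^ (μ + n) * (y / 2) ^ (μ + n + 1) / (y / 2) ^ (2 * μ + 1) := by
    rw [eq_div_iff (by positivity), ← rpow_add hq, ← pow_mul, ← rpow_natCast, ← rpow_add hq]
    push_cast; ring_nf
  rw [abs_zetaCoef_eq hμ hy.le hn]
  calc (μ + n) * Gamma (2 * μ + n) * besselI (μ + n) y * besselI (μ + n + 1) y / n !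
      ≤ Gamma (2 * μ + n + 1) * ((y / 2) ^ (μ + n) / Gamma (μ + n + 1) * exp ((y / 2) ^ 2))
          * ((y / 2) ^ (μ + n + 1) / Gamma (μ + n + 2) * exp ((y / 2) ^ 2)) / n ! := by
        gcongr
        exacts [besselI_nonneg (by linarith) hy.le, besselI_nonneg (by linarith) hy.le]
    _ = _ := by
        rw [zetaMajorant, hpow]
        field_simp

/-- Lemma 2.3, second claim. -/
theorem summable_abs_zetaCoef (μ y : ℝ) (hμ : 0 ≤ μ) (hy : 0 < y) :
    Summable fun n : ℕ => |zetaCoef μ (n + 1) y| := by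
  have hmajorant :=
    ((summable_zetaMajorant hμ (y / 2)).comp_injective (add_left_injective 1)).mul_left
      ((y / 2) ^ (2 * μ + 1) * exp ((y / 2) ^ 2) ^ 2)
  exact .of_nonneg_of_le (fun _ => abs_nonneg _) (fun n => abs_zetaCoef_le hμ hy n.succ_ne_zero)
    hmajorant
end

section
/- For every μ ≥ 1/2 and every x > 0, the ratio of Macdonald functions satisfies K_{μ+1}(x)/K_μ(x) ≤ 8 (2x+1)^{μ+1} μ / x. -/
open MeasureTheory ProbabilityTheory Real Filter Set
open scoped ENNReal NNReal Topology

/-!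
Integrating the derivative of `e^{-x cosh t} sinh (μ t)` over `(0, ∞)` gives the recurrence
`K_{μ+1}(x) - K_{μ-1}(x) = (2μ/x) K_μ(x)`. Since `cosh` is even and increasing on `[0, ∞)`,
`K_ν(x)` increases with `|ν|`, so `K_{μ-1} ≤ K_μ` once `|μ - 1| ≤ μ`, i.e. `μ ≥ 1/2`.
Hence `K_{μ+1}(x) / K_μ(x) ≤ 1 + 2μ/x`, which is well below the stated bound.
-/

noncomputable def besselKKernel (μ x t : ℝ) : ℝ :=
  exp (-(x * cosh t)) * cosh (μ * t)

lemma besselKKernel_pos (μ x t : ℝ) : 0 < besselKKernel μ x t := by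
  unfold besselKKernel
  positivity

lemma besselK_eq_integral_besselKKernel (μ x : ℝ) :
    besselK μ x = ∫ t in Ioi 0, besselKKernel μ x t := rfl

lemma cosh_le_exp_abs (u : ℝ) : cosh u ≤ exp |u| := by
  rw [← cosh_abs, cosh_eq]
  linarith [exp_le_exp.2 (neg_le_self (abs_nonneg u))]

lemma sq_div_four_le_cosh (t : ℝ) : t ^ 2 / 4 ≤ cosh t := by
  have hquad := quadratic_le_exp_of_nonneg (abs_nonneg t)
  rw [sq_abs] at hquad
  rw [← cosh_abs, cosh_eq]
  linarith [exp_pos (-|t|), abs_nonneg t]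

lemma exp_neg_mul_cosh_mul_exp_le {x : ℝ} (hx : 0 < x) (a : ℝ) :
    ∀ᶠ t in atTop, exp (-(x * cosh t)) * exp (a * t) ≤ exp (-t) := by
  filter_upwards [eventually_ge_atTop (max 0 (4 * (a + 1) / x))] with t ht
  rw [← exp_add, exp_le_exp]
  have ht₀ : 0 ≤ t := le_of_max_le_left ht
  have hxt : 4 * (a + 1) ≤ x * t := (div_le_iff₀' hx).1 (le_of_max_le_right ht)
  nlinarith [mul_le_mul_of_nonneg_left (sq_div_four_le_cosh t) hx.le]

lemma besselKKernel_isBigO {x : ℝ} (hx : 0 < x) (μ : ℝ) :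
    besselKKernel μ x =O[atTop] fun t => exp (-1 * t) := by
  refine Asymptotics.IsBigO.of_bound 1 ?_
  filter_upwards [exp_neg_mul_cosh_mul_exp_le hx |μ|, eventually_ge_atTop 0] with t ht ht₀
  rw [Real.norm_of_nonneg (besselKKernel_pos μ x t).le, besselKKernel,
    Real.norm_of_nonneg (exp_pos _).le, neg_one_mul, one_mul]
  refine le_trans (mul_le_mul_of_nonneg_left ?_ (exp_pos _).le) ht
  simpa [abs_mul, abs_of_nonneg ht₀] using cosh_le_exp_abs (μ * t)

lemma integrableOn_besselKKernel {x : ℝ} (hx : 0 < x) (μ : ℝ) :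
    IntegrableOn (besselKKernel μ x) (Ioi 0) :=
  integrable_of_isBigO_exp_neg one_pos
    (show Continuous (besselKKernel μ x) by unfold besselKKernel; fun_prop).continuousOn
    (besselKKernel_isBigO hx μ)

lemma besselK_pos {x : ℝ} (hx : 0 < x) (μ : ℝ) : 0 < besselK μ x := by
  rw [besselK_eq_integral_besselKKernel]
  refine (setIntegral_pos_iff_support_of_nonneg_ae
    (.of_forall fun t => (besselKKernel_pos μ x t).le) (integrableOn_besselKKernel hx μ)).2 ?_
  have hsupp : Ioi 0 ⊆ Function.support (besselKKernel μ x) := fun t _ =>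
    (besselKKernel_pos μ x t).ne'
  rw [inter_eq_right.2 hsupp, Real.volume_Ioi]
  exact ENNReal.zero_lt_top

lemma besselK_le_besselK_of_abs_le {x : ℝ} (hx : 0 < x) {ν μ : ℝ} (h : |ν| ≤ |μ|) :
    besselK ν x ≤ besselK μ x := by
  refine setIntegral_mono_on (integrableOn_besselKKernel hx ν) (integrableOn_besselKKernel hx μ)
    measurableSet_Ioi fun t _ => mul_le_mul_of_nonneg_left ?_ (exp_pos _).le
  rw [cosh_le_cosh, abs_mul, abs_mul]
  exact mul_le_mul_of_nonneg_right h (abs_nonneg t)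

lemma hasDerivAt_exp_neg_mul_cosh_mul_sinh (μ x t : ℝ) :
    HasDerivAt (fun t => exp (-(x * cosh t)) * sinh (μ * t))
      (μ * besselKKernel μ x t
        - x / 2 * (besselKKernel (μ + 1) x t - besselKKernel (μ - 1) x t)) t := by
  have hexp : HasDerivAt (fun t => exp (-(x * cosh t))) (exp (-(x * cosh t)) * -(x * sinh t)) t :=
    ((hasDerivAt_cosh t).const_mul x).neg.exp
  have hsinh : HasDerivAt (fun t => sinh (μ * t)) (cosh (μ * t) * μ) t := by
    simpa using ((hasDerivAt_id t).const_mul μ).sinh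
  refine (hexp.mul hsinh).congr_deriv ?_
  simp only [besselKKernel, add_mul, sub_mul, one_mul, cosh_add, cosh_sub]
  ring

lemma tendsto_exp_neg_mul_cosh_mul_sinh {x : ℝ} (hx : 0 < x) (μ : ℝ) :
    Tendsto (fun t => exp (-(x * cosh t)) * sinh (μ * t)) atTop (𝓝 0) := by
  have hkernel : Tendsto (besselKKernel μ x) atTop (𝓝 0) := by
    refine (besselKKernel_isBigO hx μ).trans_tendsto ?_
    simpa using tendsto_exp_neg_atTop_nhds_zero
  refine squeeze_zero_norm (fun t => ?_) hkernel
  rw [norm_mul, Real.norm_of_nonneg (exp_pos _).le, Real.norm_eq_abs, abs_sinh]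
  exact mul_le_mul_of_nonneg_left ((sinh_lt_cosh _).le.trans_eq (cosh_abs _)) (exp_pos _).le

lemma besselK_add_one_sub_besselK_sub_one {x : ℝ} (hx : 0 < x) (μ : ℝ) :
    besselK (μ + 1) x - besselK (μ - 1) x = 2 * μ / x * besselK μ x := by
  have hint := integrableOn_besselKKernel hx
  have hdiff : IntegrableOn
      (fun t => besselKKernel (μ + 1) x t - besselKKernel (μ - 1) x t) (Ioi 0) :=
    (hint _).sub (hint _)
  have hibp := integral_Ioi_of_hasDerivAt_of_tendsto'
    (fun t _ => hasDerivAt_exp_neg_mul_cosh_mul_sinh μ x t)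
    (((hint μ).const_mul μ).sub (hdiff.const_mul (x / 2)))
    (tendsto_exp_neg_mul_cosh_mul_sinh hx μ)
  rw [integral_sub ((hint μ).const_mul μ) (hdiff.const_mul _), integral_const_mul,
    integral_const_mul, integral_sub (hint _) (hint _)] at hibp
  simp only [← besselK_eq_integral_besselKKernel, mul_zero, sinh_zero, sub_zero] at hibp
  field_simp
  linarith

lemma besselK_add_one_div_besselK_le {x : ℝ} (hx : 0 < x) {μ : ℝ} (hμ : 1 / 2 ≤ μ) :
    besselK (μ + 1) x / besselK μ x ≤ 1 + 2 * μ / x := by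
  have hmono : besselK (μ - 1) x ≤ besselK μ x :=
    besselK_le_besselK_of_abs_le hx (abs_le_abs (by linarith) (by linarith))
  rw [div_le_iff₀ (besselK_pos hx μ)]
  linarith [besselK_add_one_sub_besselK_sub_one hx μ]

/-- Inequality (2.10): bound for the ratio of Macdonald functions. -/
theorem besselK_ratio_bound (μ x : ℝ) (hμ : 1 / 2 ≤ μ) (hx : 0 < x) :
    besselK (μ + 1) x / besselK μ x ≤ 8 * (2 * x + 1) ^ (μ + 1) * μ / x := by
  have hpow : 2 * x + 1 ≤ (2 * x + 1) ^ (μ + 1) := by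
    simpa using rpow_le_rpow_of_exponent_le (by linarith : 1 ≤ 2 * x + 1)
      (by linarith : (1 : ℝ) ≤ μ + 1)
  calc besselK (μ + 1) x / besselK μ x ≤ 1 + 2 * μ / x := besselK_add_one_div_besselK_le hx hμ
    _ = (x + 2 * μ) / x := by field_simp
    _ ≤ 8 * (2 * x + 1) ^ (μ + 1) * μ / x := by
      gcongr
      nlinarith [mul_le_mul_of_nonneg_left hpow (by linarith : (0 : ℝ) ≤ 8 * μ)]
end

section
/- Let ν ≥ 0 be a real number. For every integer n ≥ 1 and every y > 0, ((ν+n) Γ(2ν+n)/n!) · I_{ν+n}(y)/K_{ν+n}(y) ≤ (y^{2ν} Γ(2ν+1) / (2^ν Γ(ν+1)²)) · (y^{2n} / (2^n n! (n−1)!)) · e^{2y}. -/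
open MeasureTheory ProbabilityTheory Real Filter Set
open scoped ENNReal NNReal Topology

/-! The series for `I_μ(y)` is dominated termwise by `(y/2)^μ / Γ(μ+1)` times the series of
`cosh y`, because `(2k)! ≤ 4^k (k!)²` and `k! Γ(μ+1) ≤ Γ(k+μ+1)`; hence
`I_μ(y) ≤ (y/2)^μ e^y / Γ(μ+1)`. For `μ ≥ 1` and `t ≥ 0`, `cosh (μt) ≥ e^{μt}/2` and
`y cosh t ≤ (y/2)(e^t + 1)`; after `u = e^t` and `u^{μ-1} ≥ (u-1)^{μ-1}` this leaves a Gamma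
integral, so `K_μ(y) ≥ Γ(μ) e^{-y} / (2 (y/2)^μ)`. With `μ = ν + n` the ratio is then at most
`2 (y/2)^{2μ} e^{2y} / (μ Γ(μ)²)`, and the Gamma factors compare by induction on `n`, each step
reducing to `(2ν+n) n ≤ 2 (ν+n)²`. -/

lemma factorial_two_mul_le_four_pow_mul_sq (k : ℕ) :
    (2 * k).factorial ≤ 4 ^ k * k.factorial ^ 2 := by
  have h := Nat.choose_mul_factorial_mul_factorial (show k ≤ 2 * k by omega)
  rw [show 2 * k - k = k by omega, ← Nat.centralBinom_eq_two_mul_choose] at h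
  rw [← h, mul_assoc, sq]
  exact Nat.mul_le_mul_right _ (Nat.centralBinom_le_four_pow k)

lemma factorial_mul_Gamma_add_one_le {μ : ℝ} (hμ : 0 ≤ μ) (k : ℕ) :
    k.factorial * Gamma (μ + 1) ≤ Gamma (k + μ + 1) := by
  induction k with
  | zero => simp
  | succ k ih =>
    rw [Nat.factorial_succ, Nat.cast_mul, Nat.cast_succ,
      show (k + 1 : ℝ) + μ + 1 = (k + μ + 1) + 1 by ring, Gamma_add_one (s := k + μ + 1) (by positivity), mul_assoc]
    exact mul_le_mul (by linarith) ih (by positivity) (by positivity)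

lemma besselI_term_le {μ x : ℝ} (hμ : 0 ≤ μ) (hx : 0 < x) (k : ℕ) :
    (x / 2) ^ (2 * (k : ℝ) + μ) / (k.factorial * Gamma (k + μ + 1))
      ≤ (x / 2) ^ μ / Gamma (μ + 1) * (x ^ (2 * k) / (2 * k).factorial) := by
  have hpow : (x / 2) ^ (2 * (k : ℝ) + μ) = (x / 2) ^ μ * x ^ (2 * k) / 4 ^ k := by
    rw [rpow_add (by positivity), show 2 * (k : ℝ) = ((2 * k : ℕ) : ℝ) by push_cast; ring,
      rpow_natCast, div_pow, pow_mul, pow_mul]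
    norm_num
    ring
  have hden : Gamma (μ + 1) * (2 * k).factorial ≤ 4 ^ k * (k.factorial * Gamma (k + μ + 1)) :=
    calc Gamma (μ + 1) * (2 * k).factorial ≤ Gamma (μ + 1) * (4 ^ k * k.factorial ^ 2) := by
          gcongr; exact_mod_cast factorial_two_mul_le_four_pow_mul_sq k
      _ = 4 ^ k * (k.factorial * (k.factorial * Gamma (μ + 1))) := by ring
      _ ≤ 4 ^ k * (k.factorial * Gamma (k + μ + 1)) := by
          gcongr; exact factorial_mul_Gamma_add_one_le hμ k
  rw [hpow, div_mul_div_comm, div_div]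
  exact div_le_div_of_nonneg_left (by positivity) (by positivity) hden

lemma besselI_le {μ x : ℝ} (hμ : 0 ≤ μ) (hx : 0 < x) :
    besselI μ x ≤ (x / 2) ^ μ / Gamma (μ + 1) * exp x := by
  have hcosh := (hasSum_cosh x).mul_left ((x / 2) ^ μ / Gamma (μ + 1))
  have hsum : Summable fun k : ℕ =>
      (x / 2) ^ (2 * (k : ℝ) + μ) / (k.factorial * Gamma (k + μ + 1)) :=
    hcosh.summable.of_nonneg_of_le (fun k => by positivity) (besselI_term_le hμ hx)
  calc besselI μ x ≤ (x / 2) ^ μ / Gamma (μ + 1) * cosh x :=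
        hasSum_le (besselI_term_le hμ hx) hsum.hasSum hcosh
    _ ≤ (x / 2) ^ μ / Gamma (μ + 1) * exp x := by
        gcongr
        rw [cosh_eq]
        linarith [exp_le_exp.2 (show -x ≤ x by linarith)]

lemma integrableOn_rpow_sub_one_mul_exp_neg_mul {μ a : ℝ} (hμ : 0 < μ) (ha : 0 < a) :
    IntegrableOn (fun u => u ^ (μ - 1) * exp (-(a * u))) (Ioi 0) := by
  simpa using integrableOn_rpow_mul_exp_neg_mul_rpow (p := 1)
    (show -1 < μ - 1 by linarith) zero_lt_one ha

lemma exp_neg_mul_Gamma_le_integral_Ioi_one {μ a : ℝ} (hμ : 1 ≤ μ) (ha : 0 < a) :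
    exp (-a) * ((1 / a) ^ μ * Gamma μ) ≤ ∫ u in Ioi 1, u ^ (μ - 1) * exp (-(a * u)) := by
  set g : ℝ → ℝ := fun u => u ^ (μ - 1) * exp (-(a * u))
  have hshift := measurePreserving_add_right volume (1 : ℝ)
  have hemb := measurableEmbedding_addRight (1 : ℝ)
  have hpre : (· + 1) ⁻¹' Ioi (1 : ℝ) = Ioi 0 := by ext; simp
  have hg : IntegrableOn g (Ioi 0) := integrableOn_rpow_sub_one_mul_exp_neg_mul (by linarith) ha
  have hg_shift : IntegrableOn (fun w => g (w + 1)) (Ioi 0) := by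
    rw [← hpre]
    exact (hshift.integrableOn_comp_preimage hemb).2 (hg.mono_set (Ioi_subset_Ioi zero_le_one))
  rw [← hshift.setIntegral_preimage_emb hemb, hpre,
    ← integral_rpow_mul_exp_neg_mul_Ioi (by linarith) ha, ← integral_const_mul]
  refine setIntegral_mono_on (hg.const_mul _) hg_shift measurableSet_Ioi fun w hw => ?_
  have hw : 0 < w := hw
  calc exp (-a) * (w ^ (μ - 1) * exp (-(a * w)))
      ≤ (w + 1) ^ (μ - 1) * (exp (-a) * exp (-(a * w))) := by
        rw [mul_left_comm]
        gcongr
        linarith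
    _ = g (w + 1) := by simp only [g, ← exp_add]; ring_nf

lemma exp_mul_exp_rpow_mul_exp_neg (μ a t : ℝ) :
    exp t * (exp t ^ (μ - 1) * exp (-(a * exp t))) = exp (μ * t - a * exp t) := by
  rw [rpow_def_of_pos (exp_pos t), log_exp, ← exp_add, ← exp_add]
  ring_nf

lemma integrableOn_exp_mul_sub_mul_exp {μ a : ℝ} (hμ : 0 < μ) (ha : 0 < a) :
    IntegrableOn (fun t => exp (μ * t - a * exp t)) (Ioi 0) := by
  have h := (integrableOn_comp_exp_Ioi (fun u => u ^ (μ - 1) * exp (-(a * u))) 0).2 <| by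
    rw [exp_zero]
    exact (integrableOn_rpow_sub_one_mul_exp_neg_mul hμ ha).mono_set
      (Ioi_subset_Ioi zero_le_one)
  simpa only [smul_eq_mul, exp_mul_exp_rpow_mul_exp_neg] using h

lemma exp_neg_mul_Gamma_le_integral_exp_mul_sub_mul_exp {μ a : ℝ} (hμ : 1 ≤ μ) (ha : 0 < a) :
    exp (-a) * ((1 / a) ^ μ * Gamma μ) ≤ ∫ t in Ioi 0, exp (μ * t - a * exp t) := by
  have h := integral_comp_exp_Ioi (fun u => u ^ (μ - 1) * exp (-(a * u))) 0
  simp only [smul_eq_mul, exp_mul_exp_rpow_mul_exp_neg, exp_zero] at h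
  rw [h]
  exact exp_neg_mul_Gamma_le_integral_Ioi_one hμ ha

lemma besselK_integrand_le {μ y t : ℝ} (hμ : 0 ≤ μ) (hy : 0 ≤ y) (ht : 0 ≤ t) :
    exp (-(y * cosh t)) * cosh (μ * t) ≤ exp (μ * t - y / 2 * exp t) := by
  have hcosh_μt : cosh (μ * t) ≤ exp (μ * t) := by
    rw [cosh_eq]
    linarith [exp_le_exp.2 (show -(μ * t) ≤ μ * t by nlinarith)]
  have hcosh_t : y / 2 * exp t ≤ y * cosh t := by
    rw [cosh_eq]
    nlinarith [exp_pos (-t)]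
  calc exp (-(y * cosh t)) * cosh (μ * t) ≤ exp (-(y / 2 * exp t)) * exp (μ * t) := by
        gcongr
    _ = exp (μ * t - y / 2 * exp t) := by rw [← exp_add]; ring_nf

lemma besselK_integrand_ge {μ y t : ℝ} (hy : 0 ≤ y) (ht : 0 ≤ t) :
    exp (-(y / 2)) / 2 * exp (μ * t - y / 2 * exp t) ≤ exp (-(y * cosh t)) * cosh (μ * t) := by
  have hcosh_μt : exp (μ * t) / 2 ≤ cosh (μ * t) := by
    rw [cosh_eq]
    linarith [exp_pos (-(μ * t))]
  have hcosh_t : y * cosh t ≤ y / 2 * exp t + y / 2 := by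
    rw [cosh_eq]
    nlinarith [exp_le_one_iff.2 (neg_nonpos.2 ht)]
  calc exp (-(y / 2)) / 2 * exp (μ * t - y / 2 * exp t)
      = exp (-(y / 2 * exp t + y / 2)) * (exp (μ * t) / 2) := by
        rw [mul_div_assoc', div_mul_eq_mul_div, ← exp_add, ← exp_add]; ring_nf
    _ ≤ exp (-(y * cosh t)) * cosh (μ * t) := by gcongr

lemma besselK_ge {μ y : ℝ} (hμ : 1 ≤ μ) (hy : 0 < y) :
    Gamma μ * exp (-y) / (2 * (y / 2) ^ μ) ≤ besselK μ y := by
  have hM := integrableOn_exp_mul_sub_mul_exp (by linarith : 0 < μ) (by positivity : 0 < y / 2)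
  have hK : IntegrableOn (fun t => exp (-(y * cosh t)) * cosh (μ * t)) (Ioi 0) := by
    refine hM.mono' (by fun_prop) ((ae_restrict_iff' measurableSet_Ioi).2 ?_)
    filter_upwards with t ht
    rw [norm_of_nonneg (by positivity)]
    exact besselK_integrand_le (by linarith) hy.le (le_of_lt ht)
  calc Gamma μ * exp (-y) / (2 * (y / 2) ^ μ)
      = exp (-(y / 2)) / 2 * (exp (-(y / 2)) * ((1 / (y / 2)) ^ μ * Gamma μ)) := by
        rw [one_div, inv_rpow (by positivity), show -y = -(y / 2) + -(y / 2) by ring, exp_add]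
        field_simp
    _ ≤ exp (-(y / 2)) / 2 * ∫ t in Ioi 0, exp (μ * t - y / 2 * exp t) := by
        gcongr
        exact exp_neg_mul_Gamma_le_integral_exp_mul_sub_mul_exp hμ (by positivity)
    _ ≤ besselK μ y := by
        rw [← integral_const_mul]
        exact setIntegral_mono_on (hM.const_mul _) hK measurableSet_Ioi
          fun t ht => besselK_integrand_ge hy.le (le_of_lt ht)

lemma besselI_div_besselK_le {μ y : ℝ} (hμ : 1 ≤ μ) (hy : 0 < y) :
    besselI μ y / besselK μ y ≤ 2 * ((y / 2) ^ μ) ^ 2 * exp (2 * y) / (μ * Gamma μ ^ 2) := by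
  have hμ0 : 0 < μ := by linarith
  calc besselI μ y / besselK μ y
      ≤ ((y / 2) ^ μ / Gamma (μ + 1) * exp y) / (Gamma μ * exp (-y) / (2 * (y / 2) ^ μ)) :=
        div_le_div₀ (by positivity) (besselI_le hμ0.le hy) (by positivity) (besselK_ge hμ hy)
    _ = 2 * ((y / 2) ^ μ) ^ 2 * exp (2 * y) / (μ * Gamma μ ^ 2) := by
        rw [Gamma_add_one hμ0.ne', two_mul y, exp_add, exp_neg]
        field_simp

lemma two_mul_Gamma_two_mul_add_mul_factorial_le {ν : ℝ} (hν : 0 ≤ ν) {n : ℕ} (hn : 1 ≤ n) :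
    2 * Gamma (2 * ν + n) * Gamma (ν + 1) ^ 2 * (n - 1).factorial
      ≤ 2 ^ n * Gamma (2 * ν + 1) * Gamma (ν + n) ^ 2 := by
  induction n, hn using Nat.le_induction with
  | base => simp only [Nat.cast_one, Nat.sub_self, Nat.factorial_zero]; norm_num
  | succ n hn ih =>
    have hn' : (1 : ℝ) ≤ n := by exact_mod_cast hn
    have hfac : (n.factorial : ℝ) = n * (n - 1).factorial := by
      rw [← Nat.mul_factorial_pred (by omega), Nat.cast_mul]
    rw [Nat.add_sub_cancel, hfac, Nat.cast_succ,
      ← add_assoc, ← add_assoc, Gamma_add_one (s := 2 * ν + n) (by positivity),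
      Gamma_add_one (s := ν + n) (by positivity), pow_succ]
    calc 2 * ((2 * ν + n) * Gamma (2 * ν + n)) * Gamma (ν + 1) ^ 2 * (n * (n - 1).factorial)
        = ((2 * ν + n) * n) * (2 * Gamma (2 * ν + n) * Gamma (ν + 1) ^ 2 * (n - 1).factorial) := by
          ring
      _ ≤ (2 * (ν + n) ^ 2) * (2 ^ n * Gamma (2 * ν + 1) * Gamma (ν + n) ^ 2) :=
          mul_le_mul (by nlinarith) ih (by positivity) (by positivity)
      _ = 2 ^ n * 2 * Gamma (2 * ν + 1) * ((ν + n) * Gamma (ν + n)) ^ 2 := by ring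

/-- Inequality (4.1). -/
theorem bessel_ratio_term_bound (ν y : ℝ) (hν : 0 ≤ ν) (hy : 0 < y) (n : ℕ) (hn : 1 ≤ n) :
    (ν + n) * Real.Gamma (2 * ν + n) / (n.factorial : ℝ)
        * (besselI (ν + n) y / besselK (ν + n) y)
      ≤ y ^ (2 * ν) * Real.Gamma (2 * ν + 1) / (2 ^ ν * Real.Gamma (ν + 1) ^ 2)
        * (y ^ (2 * n) / (2 ^ n * (n.factorial : ℝ) * ((n - 1).factorial : ℝ)))
        * Real.exp (2 * y) := by
  have hn' : (1 : ℝ) ≤ n := by exact_mod_cast hn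
  have hpow : (y / 2) ^ (ν + n) = y ^ ν * y ^ n / (2 ^ ν * 2 ^ n) := by
    rw [div_rpow hy.le zero_le_two, rpow_add hy, rpow_add two_pos, rpow_natCast, rpow_natCast]
  have hy2ν : y ^ (2 * ν) = (y ^ ν) ^ 2 := by
    rw [mul_comm, rpow_mul hy.le, rpow_two]
  have hGamma := two_mul_Gamma_two_mul_add_mul_factorial_le hν hn
  have h2ν : (1 : ℝ) ≤ 2 ^ ν := one_le_rpow one_le_two hν
  set X := (y ^ ν) ^ 2 * (y ^ n) ^ 2 * exp (2 * y) / ((2 ^ ν) ^ 2 * (2 ^ n) ^ 2 * n.factorial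
    * Gamma (ν + 1) ^ 2 * Gamma (ν + n) ^ 2 * (n - 1).factorial) with hX
  calc (ν + n) * Gamma (2 * ν + n) / n.factorial * (besselI (ν + n) y / besselK (ν + n) y)
      ≤ (ν + n) * Gamma (2 * ν + n) / n.factorial
          * (2 * ((y / 2) ^ (ν + n)) ^ 2 * exp (2 * y) / ((ν + n) * Gamma (ν + n) ^ 2)) :=
        mul_le_mul_of_nonneg_left (besselI_div_besselK_le (by linarith) hy) (by positivity)
    _ = (2 * Gamma (2 * ν + n) * Gamma (ν + 1) ^ 2 * (n - 1).factorial) * X := by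
        rw [hpow, hX]
        field_simp
    _ ≤ (2 ^ ν * (2 ^ n * Gamma (2 * ν + 1) * Gamma (ν + n) ^ 2)) * X :=
        mul_le_mul_of_nonneg_right (hGamma.trans (le_mul_of_one_le_left (by positivity) h2ν))
          (by positivity)
    _ = _ := by
        rw [hy2ν, hX]
        field_simp
        ring
end
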